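/- Let f and g be C¹ real functions on an open interval I not containing 0, all of whose zeros are simple, with no common zero. Let m ∈ ℕ and define L(x) = x^m (d/dx)(x^{−m} f(x) g(x)). If λ₁ < λ₂ are two consecutive zeros of L in I, then the open interval (λ₁, λ₂) contains at most one point that is a zero of f or of g. -/
import Mathlib


theorem stmt_6 (a b : ℝ) (h0 : (0:ℝ) ∉ Set.Ioo a b)
    (f g : ℝ → ℝ) (m : ℕ)
    (hf : ∀ x ∈ Set.Ioo a b, ContDiffAt ℝ 1 f x)
    (hg : ∀ x ∈ Set.Ioo a b, ContDiffAt ℝ 1 g x)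
    (hfsimple : ∀ x ∈ Set.Ioo a b, f x = 0 → deriv f x ≠ 0)
    (hgsimple : ∀ x ∈ Set.Ioo a b, g x = 0 → deriv g x ≠ 0)
    (hdisj : ∀ x ∈ Set.Ioo a b, ¬ (f x = 0 ∧ g x = 0))
    (L : ℝ → ℝ)
    (hL : ∀ x ∈ Set.Ioo a b,
      L x = x ^ m * deriv (fun y : ℝ => y ^ (-(m : ℤ)) * (f y * g y)) x)
    (l1 l2 : ℝ) (hl1 : l1 ∈ Set.Ioo a b) (hl2 : l2 ∈ Set.Ioo a b)
    (hlt : l1 < l2) (hL1 : L l1 = 0) (hL2 : L l2 = 0)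
    (hconsec : ∀ x ∈ Set.Ioo l1 l2, L x ≠ 0) :
    Set.Subsingleton {x | x ∈ Set.Ioo l1 l2 ∧ (f x = 0 ∨ g x = 0)} := by
  set h : ℝ → ℝ := fun y : ℝ => y ^ (-(m : ℤ)) * (f y * g y) with hh
  have hsub : Set.Ioo l1 l2 ⊆ Set.Ioo a b := by
    intro x hx
    exact ⟨lt_trans hl1.1 hx.1, lt_trans hx.2 hl2.2⟩
  have key : ∀ p q : ℝ, p ∈ {x | x ∈ Set.Ioo l1 l2 ∧ (f x = 0 ∨ g x = 0)} →
      q ∈ {x | x ∈ Set.Ioo l1 l2 ∧ (f x = 0 ∨ g x = 0)} → p < q → False := by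
    intro p q hp hq hpq
    have hIcc : Set.Icc p q ⊆ Set.Ioo l1 l2 := by
      intro x hx
      exact ⟨lt_of_lt_of_le hp.1.1 hx.1, lt_of_le_of_lt hx.2 hq.1.2⟩
    -- continuity of h on [p,q]
    have hcont : ContinuousOn h (Set.Icc p q) := by
      intro x hx
      have hxab : x ∈ Set.Ioo a b := hsub (hIcc hx)
      have hxne : x ≠ 0 := fun hx0 => h0 (hx0 ▸ hxab)
      have c1 : ContinuousAt (fun y : ℝ => y ^ (-(m : ℤ))) x :=
        continuousAt_zpow₀ x _ (Or.inl hxne)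
      have c2 : ContinuousAt f x := (hf x hxab).continuousAt
      have c3 : ContinuousAt g x := (hg x hxab).continuousAt
      exact (c1.mul (c2.mul c3)).continuousWithinAt
    have hfp : f p * g p = 0 := by
      rcases hp.2 with h1 | h1 <;> simp [h1]
    have hfq : f q * g q = 0 := by
      rcases hq.2 with h1 | h1 <;> simp [h1]
    have hval : h p = h q := by simp [hh, hfp, hfq]
    obtain ⟨c, hc, hc0⟩ := exists_deriv_eq_zero hpq hcont hval
    have hcI : c ∈ Set.Ioo l1 l2 := hIcc ⟨le_of_lt hc.1, le_of_lt hc.2⟩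
    have : L c = 0 := by
      rw [hL c (hsub hcI), hc0, mul_zero]
    exact hconsec c hcI this
  intro x hx y hy
  rcases lt_trichotomy x y with hlt' | heq | hlt'
  · exact absurd (key x y hx hy hlt') id
  · exact heq
  · exact absurd (key y x hy hx hlt') id
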